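/- Let I ⊆ ℝ be an interval and let g and G be two differentiable convex functions on I. Let r ∈ I and δ > 0 be such that r + δ ∈ I and r − δ ∈ I. Then g′(r+δ) − g′(r−δ) ≥ 0 and |G′(r) − g′(r)| ≤ (g′(r+δ) − g′(r−δ)) + (1/δ)·Σ_{u ∈ {−δ, 0, δ}} |G(r+u) − g(r+u)|. -/

import Mathlib

open Set

lemma slope_fun_sub {k E : Type*} [Field k] [AddCommGroup E] [Module k E] (f g : k → E) (a b : k) :
    slope (fun t ↦ f t - g t) a b = slope f a b - slope g a b := by
  simp only [slope_def_module, ← smul_sub, sub_sub_sub_comm]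

lemma abs_slope_le_of_lt (f : ℝ → ℝ) {a b : ℝ} (hab : a < b) :
    |slope f a b| ≤ (|f a| + |f b|) / (b - a) := by
  rw [slope_def_field, abs_div, abs_of_pos (sub_pos.2 hab), add_comm]
  gcongr
  exact abs_sub _ _

namespace ConvexOn

variable {S : Set ℝ} {f F f' F' : ℝ → ℝ} {a x b : ℝ}

lemma le_of_hasDerivWithinAt_of_lt (hf : ConvexOn ℝ S f) (ha : a ∈ S) (hb : b ∈ S) (hab : a < b)
    (hfa : HasDerivWithinAt f (f' a) S a) (hfb : HasDerivWithinAt f (f' b) S b) :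
    f' a ≤ f' b :=
  (hf.le_slope_of_hasDerivWithinAt ha hb hab hfa).trans
    (hf.slope_le_of_hasDerivWithinAt ha hb hab hfb)

lemma slope_sub_slope_le (hf : ConvexOn ℝ S f) (ha : a ∈ S) (hx : x ∈ S) (hb : b ∈ S)
    (hax : a < x) (hxb : x < b)
    (hfa : HasDerivWithinAt f (f' a) S a) (hfb : HasDerivWithinAt f (f' b) S b) :
    slope f x b - slope f a x ≤ f' b - f' a := by
  have := hf.le_slope_of_hasDerivWithinAt ha hx hax hfa
  have := hf.slope_le_of_hasDerivWithinAt hx hb hxb hfb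
  linarith

/-- Both derivatives at `x` are squeezed between the slopes over `[a, x]` and `[x, b]`; the
slopes of `F` differ from those of `f` by slopes of `F - f`, and the spread of the slopes of `f`
is controlled by its derivatives at the endpoints. -/
lemma abs_sub_le_of_hasDerivWithinAt (hf : ConvexOn ℝ S f) (hF : ConvexOn ℝ S F)
    (ha : a ∈ S) (hx : x ∈ S) (hb : b ∈ S) (hax : a < x) (hxb : x < b)
    (hfa : HasDerivWithinAt f (f' a) S a) (hfx : HasDerivWithinAt f (f' x) S x)
    (hfb : HasDerivWithinAt f (f' b) S b) (hFx : HasDerivWithinAt F (F' x) S x) :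
    |F' x - f' x| ≤ (f' b - f' a) +
      max |slope (fun t ↦ F t - f t) a x| |slope (fun t ↦ F t - f t) x b| := by
  have hf_left := hf.slope_le_of_hasDerivWithinAt ha hx hax hfx
  have hf_right := hf.le_slope_of_hasDerivWithinAt hx hb hxb hfx
  have hF_left := hF.slope_le_of_hasDerivWithinAt ha hx hax hFx
  have hF_right := hF.le_slope_of_hasDerivWithinAt hx hb hxb hFx
  have hspread := hf.slope_sub_slope_le ha hx hb hax hxb hfa hfb
  have hmax_left := le_max_left |slope (fun t ↦ F t - f t) a x| |slope (fun t ↦ F t - f t) x b|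
  have hmax_right := le_max_right |slope (fun t ↦ F t - f t) a x| |slope (fun t ↦ F t - f t) x b|
  simp only [slope_fun_sub] at hmax_left hmax_right ⊢
  rw [abs_sub_le_iff]
  constructor
  · linarith [le_abs_self (slope F x b - slope f x b)]
  · linarith [neg_abs_le (slope F a x - slope f a x)]

end ConvexOn

theorem convex_derivative_bound_general
    (I : Set ℝ)
    (g G g' G' : ℝ → ℝ)
    (hgdiff : ∀ x ∈ I, HasDerivWithinAt g (g' x) I x)
    (hGdiff : ∀ x ∈ I, HasDerivWithinAt G (G' x) I x)
    (hgconv : ConvexOn ℝ I g) (hGconv : ConvexOn ℝ I G)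
    (r δ : ℝ) (hδ : 0 < δ) (hr : r ∈ I) (hrp : r + δ ∈ I) (hrm : r - δ ∈ I) :
    0 ≤ g' (r + δ) - g' (r - δ) ∧
    |G' r - g' r| ≤ (g' (r + δ) - g' (r - δ))
      + (1 / δ) * (|G (r - δ) - g (r - δ)| + |G r - g r| + |G (r + δ) - g (r + δ)|) := by
  have hlt_left : r - δ < r := by linarith
  have hlt_right : r < r + δ := by linarith
  refine ⟨sub_nonneg.2 <| hgconv.le_of_hasDerivWithinAt_of_lt hrm hrp (hlt_left.trans hlt_right)
    (hgdiff _ hrm) (hgdiff _ hrp), ?_⟩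
  refine (hgconv.abs_sub_le_of_hasDerivWithinAt hGconv hrm hr hrp hlt_left hlt_right
    (hgdiff _ hrm) (hgdiff _ hr) (hgdiff _ hrp) (hGdiff _ hr)).trans (add_le_add_right ?_ _)
  have h_left := abs_slope_le_of_lt (fun t ↦ G t - g t) hlt_left
  have h_right := abs_slope_le_of_lt (fun t ↦ G t - g t) hlt_right
  rw [sub_sub_cancel] at h_left
  rw [add_sub_cancel_left] at h_right
  rw [one_div_mul_eq_div]
  -- Taking the max of the two one-sided slopes, not their sum, counts `|G r - g r|` only once.
  refine max_le (h_left.trans ?_) (h_right.trans ?_) <;>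
    refine div_le_div_of_nonneg_right ?_ hδ.le <;>
    linarith [abs_nonneg (G (r - δ) - g (r - δ)), abs_nonneg (G (r + δ) - g (r + δ))]

/-- **Lemma 8 (an upper bound for differentiable convex functions).** If `g, G` are
differentiable convex functions on an interval `I ⊆ ℝ` (with derivatives `g', G'`),
`r ∈ I`, `δ > 0` and `r ± δ ∈ I`, then `g'(r+δ) − g'(r−δ) ≥ 0` and
`|G'(r) − g'(r)| ≤ (g'(r+δ) − g'(r−δ)) + (1/δ)·Σ_{u ∈ {−δ,0,δ}} |G(r+u) − g(r+u)|`. -/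
theorem convex_derivative_bound
    (I : Set ℝ) (hI : Convex ℝ I)
    (g G g' G' : ℝ → ℝ)
    (hgdiff : ∀ x ∈ I, HasDerivWithinAt g (g' x) I x)
    (hGdiff : ∀ x ∈ I, HasDerivWithinAt G (G' x) I x)
    (hgconv : ConvexOn ℝ I g) (hGconv : ConvexOn ℝ I G)
    (r δ : ℝ) (hδ : 0 < δ) (hr : r ∈ I) (hrp : r + δ ∈ I) (hrm : r - δ ∈ I) :
    0 ≤ g' (r + δ) - g' (r - δ) ∧
    |G' r - g' r| ≤ (g' (r + δ) - g' (r - δ))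
      + (1 / δ) * (|G (r - δ) - g (r - δ)| + |G r - g r| + |G (r + δ) - g (r + δ)|) :=
  convex_derivative_bound_general I g G g' G' hgdiff hGdiff hgconv hGconv r δ hδ hr hrp hrm
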